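/- Let k ≥ 2 and let χ1,…,χk be primitive characters mod 8 such that χ1⋯χk is also primitive mod 8. Let ℓ denote the number of indices 1 ≤ i ≤ k with χ_i(−1) = −1. Then J(χ1,…,χk,2^3) = 2^{3(k−1)/2} · (−1)^{⌊ℓ/2⌋}. -/

import Mathlib

open Complex

/-- The generalized Jacobi sum `J_B(χ₁,…,χ_k, q)`; `J(χ₁,…,χ_k,q) = J_1`. -/
noncomputable def Jsum {q : ℕ} [NeZero q] {k : ℕ}
    (χ : Fin k → DirichletCharacter ℂ q) (B : ZMod q) : ℂ :=
  ∑ x : Fin k → ZMod q, if (∑ i, x i) = B then ∏ i, χ i (x i) else 0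

/-!
Expanding the constraint `∑ xᵢ = B` by orthogonality of a primitive additive character `ψ`
gives `q · J_B = ∑ₜ ψ(-tB) ∏ᵢ G(χᵢ, ψ(t·))`. For primitive `χᵢ` the twisted Gauss sums
are `χᵢ⁻¹(t) G(χᵢ, ψ)`, and the sum over `t` collapses to
`q · J_B = Φ(-B) G(Φ⁻¹, ψ) ∏ᵢ G(χᵢ, ψ)` with `Φ = ∏ᵢ χᵢ`.

Modulo `8` every character is its own inverse and a primitive one has Gauss sum `2√2` or
`2√2 i` according as it is even or odd. As `Φ` is odd exactly when `ℓ` is, the identity becomes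
`8 J = (2√2)^(k+1) (-i)^ℓ i^(ℓ mod 2) = (2√2)^(k+1) (-1)^⌊ℓ/2⌋`.
-/

open Finset AddChar

lemma AddChar.map_sum_eq_prod {ι A M : Type*} [AddCommMonoid A] [CommMonoid M]
    (ψ : AddChar A M) (s : Finset ι) (x : ι → A) :
    ψ (∑ i ∈ s, x i) = ∏ i ∈ s, ψ (x i) := by
  classical
  induction s using Finset.induction_on with
  | empty => simp
  | insert i s hi ih => rw [sum_insert hi, prod_insert hi, map_add_eq_mul, ih]

lemma MulChar.prod_apply {ι R R' : Type*} [CommMonoid R] [CommMonoidWithZero R']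
    {s : Finset ι} (hs : s.Nonempty) (χ : ι → MulChar R R') (a : R) :
    (∏ i ∈ s, χ i) a = ∏ i ∈ s, χ i a := by
  induction hs using Finset.Nonempty.cons_induction with
  | singleton i => simp
  | cons i s hi hs ih => rw [prod_cons, prod_cons, MulChar.coeToFun_mul, Pi.mul_apply, ih]

section Fourier

variable {q : ℕ} [NeZero q] {k : ℕ} {ψ : AddChar (ZMod q) ℂ}

lemma natCast_mul_Jsum_eq_sum_prod_gaussSum (hψ : ψ.IsPrimitive)
    (χ : Fin k → DirichletCharacter ℂ q) (B : ZMod q) :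
    (q : ℂ) * Jsum χ B = ∑ t, ψ (-(t * B)) * ∏ i, gaussSum (χ i) (ψ.mulShift t) := by
  have expand (t : ZMod q) : ∏ i, gaussSum (χ i) (ψ.mulShift t) =
      ∑ x : Fin k → ZMod q, (∏ i, χ i (x i)) * ψ (∑ i, t * x i) := by
    simp only [gaussSum, mulShift_apply, prod_univ_sum, Fintype.piFinset_univ, prod_mul_distrib,
      map_sum_eq_prod]
  calc (q : ℂ) * Jsum χ B
      = ∑ x : Fin k → ZMod q, ∑ t, (∏ i, χ i (x i)) * ψ (t * ((∑ i, x i) - B)) := by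
        simp only [Jsum, mul_sum]
        refine sum_congr rfl fun x _ => ?_
        rw [← mul_sum, sum_mulShift _ hψ, ZMod.card]
        simp only [sub_eq_zero]
        split_ifs <;> simp [mul_comm]
    _ = ∑ t, ∑ x : Fin k → ZMod q,
          ψ (-(t * B)) * ((∏ i, χ i (x i)) * ψ (∑ i, t * x i)) := by
        rw [sum_comm]
        refine sum_congr rfl fun t _ => sum_congr rfl fun x _ => ?_
        rw [mul_sub, sub_eq_neg_add, map_add_eq_mul, mul_sum]
        ring
    _ = ∑ t, ψ (-(t * B)) * ∏ i, gaussSum (χ i) (ψ.mulShift t) := by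
        simp only [expand, mul_sum]

lemma natCast_mul_Jsum_eq_mul_prod_gaussSum [NeZero k] (hψ : ψ.IsPrimitive)
    (χ : Fin k → DirichletCharacter ℂ q) (hχ : ∀ i, (χ i).IsPrimitive) (B : (ZMod q)ˣ) :
    (q : ℂ) * Jsum χ B =
      (∏ i, χ i) (-B) * gaussSum (∏ i, χ i)⁻¹ ψ * ∏ i, gaussSum (χ i) ψ := by
  have hprod (t : ZMod q) : ∏ i, gaussSum (χ i) (ψ.mulShift t) =
      (∏ i, χ i)⁻¹ t * ∏ i, gaussSum (χ i) ψ := by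
    simp only [gaussSum_mulShift_of_isPrimitive _ (hχ _), prod_mul_distrib, ← prod_inv_distrib,
      MulChar.prod_apply univ_nonempty]
  rw [natCast_mul_Jsum_eq_sum_prod_gaussSum hψ]
  simp only [hprod, ← mul_assoc, ← sum_mul]
  congr 1
  have hshift := gaussSum_mulShift_eq (∏ i, χ i)⁻¹ ψ (-B)
  rw [inv_inv, Units.val_neg] at hshift
  rw [← hshift, gaussSum]
  exact sum_congr rfl fun t _ => by rw [mulShift_apply, neg_mul, mul_comm (B : ZMod q) t, mul_comm]

end Fourier

noncomputable def zeta8 : ℂ := (1 + I) / (Real.sqrt 2 : ℂ)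

lemma ofReal_sqrt_two_sq : (Real.sqrt 2 : ℂ) ^ 2 = 2 := by
  norm_cast; exact Real.sq_sqrt zero_le_two

lemma ofReal_sqrt_two_ne_zero : (Real.sqrt 2 : ℂ) ≠ 0 := by
  exact_mod_cast (Real.sqrt_pos.2 two_pos).ne'

lemma zeta8_sq : zeta8 ^ 2 = I := by
  rw [zeta8, div_pow, ofReal_sqrt_two_sq, div_eq_iff two_ne_zero]
  linear_combination I_sq

lemma zeta8_pow_four : zeta8 ^ 4 = -1 := by
  rw [show 4 = 2 * 2 from rfl, pow_mul, zeta8_sq, I_sq]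

lemma zeta8_pow_eight : zeta8 ^ 8 = 1 := by
  rw [show 8 = 4 * 2 from rfl, pow_mul, zeta8_pow_four, neg_one_sq]

lemma isPrimitiveRoot_zeta8 : IsPrimitiveRoot zeta8 8 :=
  IsPrimitiveRoot.iff_orderOf.2 <| orderOf_eq_prime_pow (p := 2) (n := 2)
    (by norm_num [zeta8_pow_four]) zeta8_pow_eight

lemma zeta8_sub_zeta8_pow_three : zeta8 - zeta8 ^ 3 = Real.sqrt 2 := by
  rw [pow_succ, zeta8_sq, zeta8]
  field_simp [ofReal_sqrt_two_ne_zero]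
  linear_combination -I_sq - ofReal_sqrt_two_sq

lemma zeta8_add_zeta8_pow_three : zeta8 + zeta8 ^ 3 = Real.sqrt 2 * I := by
  rw [pow_succ, zeta8_sq, zeta8]
  field_simp [ofReal_sqrt_two_ne_zero]
  linear_combination I_sq - I * ofReal_sqrt_two_sq

noncomputable def psi8 : AddChar (ZMod 8) ℂ := zmodChar 8 zeta8_pow_eight

lemma isPrimitive_psi8 : psi8.IsPrimitive :=
  zmodChar_primitive_of_primitive_root 8 isPrimitiveRoot_zeta8

lemma Fintype.prod_ite_one_eq_pow_card {ι M : Type*} [Fintype ι] [CommMonoid M] (p : ι → Prop)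
    [DecidablePred p] (a : M) : ∏ i, (if p i then a else 1) = a ^ Nat.card {i // p i} := by
  rw [prod_ite, prod_const, prod_const_one, mul_one, Nat.card_eq_fintype_card,
    Fintype.card_subtype]

lemma ZMod.sum_univ_eight {M : Type*} [AddCommMonoid M] (f : ZMod 8 → M) :
    ∑ a, f a = f 0 + f 1 + f 2 + f 3 + f 4 + f 5 + f 6 + f 7 :=
  Fin.sum_univ_eight f

section ModEight

variable (χ : DirichletCharacter ℂ 8)

lemma DirichletCharacter.apply_five_of_isPrimitive (hχ : χ.IsPrimitive) : χ 5 = -1 := by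
  have hsq : χ 5 * χ 5 = 1 := by rw [← map_mul, show (5 * 5 : ZMod 8) = 1 from rfl, map_one]
  refine (mul_self_eq_one_iff.1 hsq).resolve_left fun h5 => ?_
  have hd : 4 ∣ 8 := by norm_num
  have hker : ∀ u : (ZMod 8)ˣ, ZMod.unitsMap hd u = 1 → (u : ZMod 8) = 1 ∨ (u : ZMod 8) = 5 :=
    by decide +revert
  have hfact : χ.FactorsThrough 4 := by
    rw [DirichletCharacter.factorsThrough_iff_ker_unitsMap hd]
    intro u hu
    rw [MonoidHom.mem_ker, ← Units.val_inj, MulChar.coe_toUnitHom, Units.val_one]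
    rcases hker u hu with h | h <;> rw [h]
    exacts [map_one χ, h5]
  have : χ.conductor ≤ 4 := Nat.sInf_le hfact
  rw [DirichletCharacter.IsPrimitive] at hχ
  omega

lemma DirichletCharacter.inv_eq_self_of_eight : χ⁻¹ = χ := by
  refine MulChar.ext fun u => ?_
  have hsq : χ u * χ u = 1 := by
    rw [← map_mul, show (u * u : ZMod 8) = 1 by revert u; decide, map_one]
  rw [MulChar.inv_apply_eq_inv', inv_eq_of_mul_eq_one_right hsq]

lemma DirichletCharacter.gaussSum_psi8 (hχ : χ.IsPrimitive) :
    gaussSum χ psi8 = Real.sqrt 2 ^ 3 * if χ (-1) = -1 then I else 1 := by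
  have h7 : χ 7 = χ (-1) := rfl
  have h3 : χ 3 = -χ (-1) := by
    rw [← h7, show (3 : ZMod 8) = 5 * 7 from rfl, map_mul, χ.apply_five_of_isPrimitive hχ]; ring
  have hG : gaussSum χ psi8 = 2 * (zeta8 - χ (-1) * zeta8 ^ 3) := by
    simp only [gaussSum, psi8, zmodChar_apply]
    rw [ZMod.sum_univ_eight]
    have hnonunit (a : ZMod 8) (ha : ¬IsUnit a) : χ a = 0 := χ.map_nonunit ha
    rw [hnonunit 0 (by decide), hnonunit 2 (by decide), hnonunit 4 (by decide),
      hnonunit 6 (by decide), map_one, h7, h3, χ.apply_five_of_isPrimitive hχ]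
    norm_num [ZMod.val_ofNat, ZMod.val_one_eq_one_mod]
    linear_combination (-zeta8 + χ (-1) * zeta8 ^ 3) * zeta8_pow_four
  rw [hG]
  rcases χ.even_or_odd with h | h
  · rw [h, one_mul, zeta8_sub_zeta8_pow_three, if_neg (by norm_num)]
    linear_combination -(Real.sqrt 2 : ℂ) * ofReal_sqrt_two_sq
  · rw [h, neg_one_mul, sub_neg_eq_add, zeta8_add_zeta8_pow_three, if_pos rfl]
    linear_combination -(Real.sqrt 2 * I) * ofReal_sqrt_two_sq

end ModEight

lemma DirichletCharacter.prod_gaussSum_psi8 {ι : Type*} [Fintype ι]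
    (χ : ι → DirichletCharacter ℂ 8) (hχ : ∀ i, (χ i).IsPrimitive) :
    ∏ i, gaussSum (χ i) psi8 =
      (Real.sqrt 2 ^ 3) ^ Fintype.card ι * I ^ Nat.card {i // χ i (-1) = -1} := by
  rw [prod_congr rfl fun i _ => (χ i).gaussSum_psi8 (hχ i), prod_mul_distrib, prod_const,
    card_univ, Fintype.prod_ite_one_eq_pow_card]

lemma DirichletCharacter.prod_apply_neg_one {ι S : Type*} [Fintype ι] [Nonempty ι] [CommRing S]
    [NoZeroDivisors S] {m : ℕ} (χ : ι → DirichletCharacter S m) :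
    (∏ i, χ i) (-1) = (-1) ^ Nat.card {i // χ i (-1) = -1} := by
  classical
  rw [MulChar.prod_apply univ_nonempty, ← Fintype.prod_ite_one_eq_pow_card]
  refine prod_congr rfl fun i _ => ?_
  split_ifs with h
  exacts [h, (χ i).even_or_odd.resolve_right h]

lemma neg_one_pow_mul_I_pow_mul_ite (ℓ : ℕ) :
    (-1 : ℂ) ^ ℓ * I ^ ℓ * (if (-1 : ℂ) ^ ℓ = -1 then I else 1) = (-1) ^ (ℓ / 2) := by
  obtain ⟨u, rfl | rfl⟩ := Nat.even_or_odd' ℓ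
  · rw [if_neg (by rw [pow_mul]; norm_num), pow_mul, pow_mul, I_sq]
    norm_num
  · rw [if_pos (by rw [pow_succ, pow_mul]; norm_num), pow_succ, pow_succ, pow_mul, pow_mul, I_sq,
      show (2 * u + 1) / 2 = u by omega]
    linear_combination -(-1 : ℂ) ^ u * I_sq

theorem stmt5 {k : ℕ}
    (χ : Fin k → DirichletCharacter ℂ (2 ^ 3))
    (hprim : ∀ i, (χ i).IsPrimitive)
    (hprodprim : (∏ i, χ i).IsPrimitive)
    -- ℓ is the number of indices with χ_i(-1) = -1
    (ℓ : ℕ) (hℓ : ℓ = Nat.card {i : Fin k // χ i (-1) = -1}) :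
    Jsum χ (1 : ZMod (2 ^ 3)) =
      (Real.sqrt 2 : ℂ) ^ (3 * (k - 1)) * (-1 : ℂ) ^ (ℓ / 2) := by
  have hk : k ≠ 0 := by
    rintro rfl
    rw [Fin.prod_univ_zero, DirichletCharacter.isPrimitive_def,
      DirichletCharacter.conductor_one] at hprodprim
    norm_num at hprodprim
  have : NeZero k := ⟨hk⟩
  have key := natCast_mul_Jsum_eq_mul_prod_gaussSum isPrimitive_psi8 χ hprim 1
  rw [Units.val_one, DirichletCharacter.inv_eq_self_of_eight,
    DirichletCharacter.gaussSum_psi8 _ hprodprim, DirichletCharacter.prod_gaussSum_psi8 χ hprim,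
    DirichletCharacter.prod_apply_neg_one, ← hℓ, Fintype.card_fin] at key
  have hsix : (Real.sqrt 2 : ℂ) ^ (2 * 3) = 8 := by
    rw [pow_mul, ofReal_sqrt_two_sq]; norm_num
  obtain ⟨n, rfl⟩ : ∃ n, k = n + 1 := ⟨k - 1, by omega⟩
  rw [← neg_one_pow_mul_I_pow_mul_ite ℓ, Nat.add_sub_cancel]
  push_cast at key
  linear_combination key / 8 + (Real.sqrt 2 : ℂ) ^ (3 * n) * (-1 : ℂ) ^ ℓ * I ^ ℓ *
    (if (-1 : ℂ) ^ ℓ = -1 then I else 1) / 8 * hsix
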